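/- Under the SGD setup, suppose in addition that 0 ≤ α_m ≤ 1/L, ∑_{m=1}^∞ α_m = ∞, α_m → 0 as m → ∞, and E[f(w_m)] < ∞ for all m (but ∑ α_m² < ∞ is NOT assumed). Then liminf_{m→∞} E[|∇f(w_m)|²] = 0. -/

import Mathlib

open Filter MeasureTheory ProbabilityTheory

open InnerProductSpace

variable {dd : ℕ}
local notation "E" => EuclideanSpace ℝ (Fin dd)

lemma sgd_fderiv_eq (f : E → ℝ) (x : E) (u : E) :
    fderiv ℝ f x u = inner (𝕜 := ℝ) (gradient f x) u := by
  rw [gradient, ← InnerProductSpace.toDual_apply_apply, LinearIsometryEquiv.apply_symm_apply]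

lemma sgd_grad_lip {f : E → ℝ} {L : ℝ} (hf : ContDiff ℝ 2 f)
    (hHess : ∀ x, ‖fderiv ℝ (gradient f) x‖ ≤ L) (x y : E) :
    ‖gradient f y - gradient f x‖ ≤ L * ‖y - x‖ := by
  have h1 : ContDiff ℝ 1 (fderiv ℝ f) := hf.fderiv_right (by norm_num)
  have hdg : Differentiable ℝ (gradient f) := by
    have : gradient f = fun z => (toDual ℝ E).symm (fderiv ℝ f z) := rfl
    rw [this]
    exact ((toDual ℝ E).symm.toContinuousLinearEquiv.differentiable).comp (h1.differentiable (by norm_num))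
  exact Convex.norm_image_sub_le_of_norm_fderiv_le (fun z _ => (hdg z))
    (fun z _ => hHess z) convex_univ trivial trivial

lemma sgd_descent {f : E → ℝ} {L : ℝ} (hf : ContDiff ℝ 2 f)
    (hHess : ∀ x, ‖fderiv ℝ (gradient f) x‖ ≤ L) (hL : 0 ≤ L) (x y : E) :
    f y ≤ f x + inner (𝕜 := ℝ) (gradient f x) (y - x) + L * ‖y - x‖ ^ 2 := by
  have hd : Differentiable ℝ f := hf.differentiable (by norm_num)
  set h : E → ℝ := fun z => f z - (fderiv ℝ f x) z with hh
  have hdh : ∀ z, DifferentiableAt ℝ h z := fun z =>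
    (hd z).sub ((fderiv ℝ f x).differentiableAt)
  have hfd : ∀ z, fderiv ℝ h z = fderiv ℝ f z - fderiv ℝ f x := by
    intro z
    rw [hh]
    rw [fderiv_fun_sub (hd z) ((fderiv ℝ f x).differentiableAt)]
    simp [(fderiv ℝ f x).fderiv]
  have key : ‖h y - h x‖ ≤ (L * ‖y - x‖) * ‖y - x‖ := by
    refine Convex.norm_image_sub_le_of_norm_fderiv_le (fun z _ => hdh z)
      (fun z hz => ?_) (convex_segment x y) (left_mem_segment ℝ x y) (right_mem_segment ℝ x y)
    rw [hfd]
    have h1 : ‖fderiv ℝ f z - fderiv ℝ f x‖ = ‖gradient f z - gradient f x‖ := by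
      rw [gradient, gradient, ← LinearIsometryEquiv.map_sub, LinearIsometryEquiv.norm_map]
    rw [h1]
    refine (sgd_grad_lip hf hHess x z).trans ?_
    have : ‖z - x‖ ≤ ‖y - x‖ := by
      obtain ⟨a, b, ha, hb, hab, rfl⟩ := hz
      have : a • x + b • y - x = b • (y - x) := by
        have : a = 1 - b := by linarith
        subst this
        module
      rw [this, norm_smul, Real.norm_eq_abs, abs_of_nonneg hb]
      nlinarith [norm_nonneg (y - x)]
    nlinarith [norm_nonneg (y - x), norm_nonneg (z - x)]
  have h2 : h y - h x = f y - f x - inner (𝕜 := ℝ) (gradient f x) (y - x) := by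
    simp only [hh]
    rw [← sgd_fderiv_eq, map_sub]
    ring
  rw [h2] at key
  have := abs_le.mp (by rwa [Real.norm_eq_abs] at key)
  nlinarith [this.2]

lemma sgd_grad_sq {f : E → ℝ} {L : ℝ} (hf : ContDiff ℝ 2 f) (hf0 : ∀ x, 0 ≤ f x)
    (hHess : ∀ x, ‖fderiv ℝ (gradient f) x‖ ≤ L) (hL : 0 < L) (x : E) :
    ‖gradient f x‖ ^ 2 ≤ 4 * L * f x := by
  have h := sgd_descent hf hHess hL.le x (x - (1 / (2 * L)) • gradient f x)
  have hy : x - (1 / (2 * L)) • gradient f x - x = -((1 / (2 * L)) • gradient f x) := by abel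
  rw [hy] at h
  have h1 : inner (𝕜 := ℝ) (gradient f x) (-((1 / (2 * L)) • gradient f x))
      = -(1 / (2 * L)) * ‖gradient f x‖ ^ 2 := by
    rw [inner_neg_right, real_inner_smul_right, real_inner_self_eq_norm_sq]
    ring
  have h2 : ‖-((1 / (2 * L)) • gradient f x)‖ ^ 2
      = (1 / (2 * L)) ^ 2 * ‖gradient f x‖ ^ 2 := by
    rw [norm_neg, norm_smul, Real.norm_eq_abs, mul_pow, sq_abs]
  rw [h1, h2] at h
  have h0 := hf0 (x - (1 / (2 * L)) • gradient f x)
  have hL' : (0:ℝ) < 2 * L := by linarith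
  have e1 : L * ((1 / (2 * L)) ^ 2 * ‖gradient f x‖ ^ 2)
      = (1 / (4 * L)) * ‖gradient f x‖ ^ 2 := by
    field_simp
    ring
  rw [e1] at h
  have : (1 / (4 * L)) * ‖gradient f x‖ ^ 2 ≤ f x := by
    have h5 : (1 / (2 * L)) * ‖gradient f x‖ ^ 2 - (1 / (4 * L)) * ‖gradient f x‖ ^ 2
        = (1 / (4 * L)) * ‖gradient f x‖ ^ 2 := by
      field_simp
      ring
    linarith
  calc ‖gradient f x‖ ^ 2 = (4 * L) * ((1 / (4 * L)) * ‖gradient f x‖ ^ 2) := by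
        field_simp
    _ ≤ 4 * L * f x := by nlinarith

lemma sgd_grad_cont {f : E → ℝ} (hf : ContDiff ℝ 2 f) : Continuous (gradient f) := by
  have h1 : Continuous (fderiv ℝ f) := (hf.fderiv_right (m := 1) (by norm_num)).continuous
  exact (toDual ℝ E).symm.continuous.comp h1

lemma sgd_coord_abs_le (x : E) (i : Fin dd) : |x i| ≤ ‖x‖ := by
  have h1 : |x i| ^ 2 ≤ ‖x‖ ^ 2 := by
    rw [EuclideanSpace.norm_eq, Real.sq_sqrt (by positivity), sq_abs]
    calc x i ^ 2 = ‖x i‖ ^ 2 := by rw [Real.norm_eq_abs, sq_abs]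
      _ ≤ ∑ j, ‖x j‖ ^ 2 := Finset.single_le_sum (f := fun j => ‖x j‖ ^ 2)
          (fun j _ => sq_nonneg _) (Finset.mem_univ i)
  calc |x i| = Real.sqrt (|x i| ^ 2) := by rw [Real.sqrt_sq (abs_nonneg _)]
    _ ≤ Real.sqrt (‖x‖ ^ 2) := Real.sqrt_le_sqrt h1
    _ = ‖x‖ := Real.sqrt_sq (norm_nonneg _)

lemma sgd_inner_eq (x y : E) : inner (𝕜 := ℝ) x y = ∑ i, x i * y i := by
  simp [PiLp.inner_apply, RCLike.inner_apply, mul_comm]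

lemma sgd_norm_sq_eq (x : E) : ‖x‖ ^ 2 = ∑ i, x i * x i := by
  rw [← real_inner_self_eq_norm_sq, sgd_inner_eq]

lemma sgd_inner_integral {Ω : Type*} {m : MeasurableSpace Ω} [inst : MeasurableSpace Ω]
    (μ : Measure Ω) [IsProbabilityMeasure μ] (hm : m ≤ inst)
    {F g : Ω → E} (hF : StronglyMeasurable[m] F)
    (hF2 : Integrable (fun ω => ‖F ω‖ ^ 2) μ)
    (hgm : AEStronglyMeasurable g μ)
    (hg2 : Integrable (fun ω => ‖g ω‖ ^ 2) μ)
    (hcond : μ[g | m] =ᵐ[μ] F) :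
    ∫ ω, inner (𝕜 := ℝ) (F ω) (g ω) ∂μ = ∫ ω, ‖F ω‖ ^ 2 ∂μ := by
  haveI : SigmaFinite (μ.trim hm) := inferInstance
  have hFm : AEStronglyMeasurable F μ := (hF.mono hm).aestronglyMeasurable
  have hFint : Integrable F μ := by
    refine Integrable.mono' (hF2.add (integrable_const 1)) hFm ?_
    filter_upwards with ω
    simp only [Pi.add_apply]
    nlinarith [norm_nonneg (F ω), sq_nonneg (‖F ω‖ - 1)]
  have hgint : Integrable g μ := by
    refine Integrable.mono' (hg2.add (integrable_const 1)) hgm ?_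
    filter_upwards with ω
    simp only [Pi.add_apply]
    nlinarith [norm_nonneg (g ω), sq_nonneg (‖g ω‖ - 1)]
  -- coordinate facts
  have hFi_sm : ∀ i : Fin dd, StronglyMeasurable[m] (fun ω => F ω i) := fun i =>
    (EuclideanSpace.proj (𝕜 := ℝ) i).continuous.comp_stronglyMeasurable hF
  have hFi_int : ∀ i : Fin dd, Integrable (fun ω => F ω i) μ := fun i => by
    refine Integrable.mono' hFint.norm ((hFi_sm i).mono hm).aestronglyMeasurable ?_
    filter_upwards with ω
    simpa [Real.norm_eq_abs] using sgd_coord_abs_le (F ω) i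
  have hgi_int : ∀ i : Fin dd, Integrable (fun ω => g ω i) μ := fun i => by
    refine Integrable.mono' hgint.norm
      ((EuclideanSpace.proj (𝕜 := ℝ) i).continuous.comp_aestronglyMeasurable hgm) ?_
    filter_upwards with ω
    simpa [Real.norm_eq_abs] using sgd_coord_abs_le (g ω) i
  have hFgi_int : ∀ i : Fin dd, Integrable (fun ω => F ω i * g ω i) μ := fun i => by
    refine Integrable.mono' ((hF2.add hg2).const_mul (1/2))
      (((hFi_sm i).mono hm).aestronglyMeasurable.mul
        ((EuclideanSpace.proj (𝕜 := ℝ) i).continuous.comp_aestronglyMeasurable hgm)) ?_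
    filter_upwards with ω
    have h1 := sgd_coord_abs_le (F ω) i
    have h2 := sgd_coord_abs_le (g ω) i
    have : ‖F ω i * g ω i‖ = |F ω i| * |g ω i| := by rw [Real.norm_eq_abs, abs_mul]
    rw [this]
    simp only [Pi.add_apply]
    nlinarith [abs_nonneg (F ω i), abs_nonneg (g ω i), norm_nonneg (F ω), norm_nonneg (g ω),
      sq_nonneg (‖F ω‖ - ‖g ω‖)]
  have hFii_int : ∀ i : Fin dd, Integrable (fun ω => F ω i * F ω i) μ := fun i => by
    refine Integrable.mono' hF2 (((hFi_sm i).mono hm).aestronglyMeasurable.mul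
      ((hFi_sm i).mono hm).aestronglyMeasurable) ?_
    filter_upwards with ω
    have h1 := sgd_coord_abs_le (F ω) i
    have : ‖F ω i * F ω i‖ = |F ω i| * |F ω i| := by rw [Real.norm_eq_abs, abs_mul]
    rw [this]
    nlinarith [abs_nonneg (F ω i)]
  -- conditional expectation of coordinates
  have hcond_i : ∀ i : Fin dd, (fun ω => F ω i) =ᵐ[μ] μ[(fun ω => g ω i) | m] := by
    intro i
    refine ae_eq_condExp_of_forall_setIntegral_eq hm (hgi_int i)
      (fun s _ _ => (hFi_int i).integrableOn) (fun s hs hμs => ?_)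
      ((hFi_sm i).aestronglyMeasurable)
    have hv : ∫ ω in s, g ω ∂μ = ∫ ω in s, F ω ∂μ := by
      rw [← setIntegral_condExp hm hgint hs]
      exact setIntegral_congr_ae (hm s hs)
        (hcond.mono fun ω h _ => h.symm) |>.symm
    have e1 : ∫ ω in s, (EuclideanSpace.proj (𝕜 := ℝ) i) (F ω) ∂μ
        = (EuclideanSpace.proj (𝕜 := ℝ) i) (∫ ω in s, F ω ∂μ) :=
      (EuclideanSpace.proj (𝕜 := ℝ) i).integral_comp_comm hFint.integrableOn
    have e2 : ∫ ω in s, (EuclideanSpace.proj (𝕜 := ℝ) i) (g ω) ∂μ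
        = (EuclideanSpace.proj (𝕜 := ℝ) i) (∫ ω in s, g ω ∂μ) :=
      (EuclideanSpace.proj (𝕜 := ℝ) i).integral_comp_comm hgint.integrableOn
    show ∫ ω in s, (EuclideanSpace.proj (𝕜 := ℝ) i) (F ω) ∂μ
        = ∫ ω in s, (EuclideanSpace.proj (𝕜 := ℝ) i) (g ω) ∂μ
    rw [e1, e2, hv]
  -- pull-out and integrate
  have hkey : ∀ i : Fin dd, ∫ ω, F ω i * g ω i ∂μ = ∫ ω, F ω i * F ω i ∂μ := by
    intro i
    have hmul := condExp_mul_of_stronglyMeasurable_left (μ := μ) (hFi_sm i)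
      (show Integrable ((fun ω => F ω i) * fun ω => g ω i) μ from hFgi_int i) (hgi_int i)
    calc ∫ ω, F ω i * g ω i ∂μ
        = ∫ ω, (μ[(fun ω => F ω i) * (fun ω => g ω i) | m]) ω ∂μ :=
          (integral_condExp hm).symm
      _ = ∫ ω, ((fun ω => F ω i) * μ[(fun ω => g ω i) | m]) ω ∂μ :=
          integral_congr_ae hmul
      _ = ∫ ω, F ω i * F ω i ∂μ := by
          refine integral_congr_ae ?_
          filter_upwards [hcond_i i] with ω h
          simp [Pi.mul_apply, ← h]
  calc ∫ ω, inner (𝕜 := ℝ) (F ω) (g ω) ∂μ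
      = ∫ ω, ∑ i, F ω i * g ω i ∂μ := by
        refine integral_congr_ae ?_
        filter_upwards with ω
        exact sgd_inner_eq _ _
    _ = ∑ i, ∫ ω, F ω i * g ω i ∂μ := integral_finset_sum _ (fun i _ => hFgi_int i)
    _ = ∑ i, ∫ ω, F ω i * F ω i ∂μ := by
        exact Finset.sum_congr rfl (fun i _ => hkey i)
    _ = ∫ ω, ∑ i, F ω i * F ω i ∂μ := (integral_finset_sum _ (fun i _ => hFii_int i)).symm
    _ = ∫ ω, ‖F ω‖ ^ 2 ∂μ := by
        refine integral_congr_ae ?_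
        filter_upwards with ω
        exact (sgd_norm_sq_eq _).symm

lemma sgd_inner_integrable {Ω : Type*} [MeasurableSpace Ω] {μ : Measure Ω} {F g : Ω → E}
    (hFm : AEStronglyMeasurable F μ) (hgm : AEStronglyMeasurable g μ)
    (hF2 : Integrable (fun ω => ‖F ω‖ ^ 2) μ) (hg2 : Integrable (fun ω => ‖g ω‖ ^ 2) μ) :
    Integrable (fun ω => inner (𝕜 := ℝ) (F ω) (g ω)) μ := by
  refine Integrable.mono' ((hF2.add hg2).const_mul (1/2)) (hFm.inner hgm) ?_
  filter_upwards with ω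
  simp only [Pi.add_apply]
  have h1 := abs_real_inner_le_norm (F ω) (g ω)
  rw [Real.norm_eq_abs]
  nlinarith [sq_nonneg (‖F ω‖ - ‖g ω‖), norm_nonneg (F ω), norm_nonneg (g ω)]


/-- the nonconvex case without square summability. Under the SGD setup
with `0 ≤ α_m ≤ 1/L`, `∑ α_m = ∞`, `α_m → 0`, and `E[f(w_m)] < ∞` for all `m` (sequences
indexed from `0`; `∑ α_m² < ∞` is NOT assumed), one has
`liminf_{m→∞} E[‖∇f(w_m)‖²] = 0`. -/
theorem stmt13 {d : ℕ} (f : EuclideanSpace ℝ (Fin d) → ℝ) (L σ : ℝ)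
        (hf : ContDiff ℝ 2 f) (hf0 : ∀ x, 0 ≤ f x)
        (hHess : ∀ x, ‖fderiv ℝ (gradient f) x‖ ≤ L) (hL : 0 < L)
        {Ω : Type*} [inst : MeasurableSpace Ω] (μ : Measure Ω) [IsProbabilityMeasure μ]
        (𝓕 : ℕ → MeasurableSpace Ω) (h𝓕 : ∀ m, 𝓕 m ≤ inst)
        (w g : ℕ → Ω → EuclideanSpace ℝ (Fin d)) (α : ℕ → ℝ)
        (hw : ∀ m, StronglyMeasurable[𝓕 m] (w m))
        (hg : ∀ m, AEStronglyMeasurable (g m) μ)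
        (hiter : ∀ m, ∀ ω, w (m + 1) ω = w m ω - α m • g m ω)
        (hunbiased : ∀ m, μ[g m | 𝓕 m] =ᵐ[μ] fun ω => gradient f (w m ω))
        (hg2 : ∀ m, Integrable (fun ω => ‖g m ω‖ ^ 2) μ)
        (hvar : ∀ m, ∫ ω, (‖g m ω‖ ^ 2 - ‖gradient f (w m ω)‖ ^ 2) ∂μ ≤ σ ^ 2)
        (hα : ∀ m, 0 ≤ α m) (hαL : ∀ m, α m ≤ 1 / L)
    (hdiv : Tendsto (fun M => ∑ m ∈ Finset.range M, α m) atTop atTop)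
    (hα0 : Tendsto α atTop (nhds 0))
    (hint : ∀ m, Integrable (fun ω => f (w m ω)) μ) :
    liminf (fun m => ∫ ω, ‖gradient f (w m ω)‖ ^ 2 ∂μ) atTop = 0 := by
  have hgc : Continuous (gradient f) := sgd_grad_cont hf
  set G : ℕ → ℝ := fun m => ∫ ω, ‖gradient f (w m ω)‖ ^ 2 ∂μ with hGdef
  set Φ : ℕ → ℝ := fun m => ∫ ω, f (w m ω) ∂μ with hΦdef
  have hFsm : ∀ m, StronglyMeasurable[𝓕 m] (fun ω => gradient f (w m ω)) :=
    fun m => hgc.comp_stronglyMeasurable (hw m)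
  have hFaem : ∀ m, AEStronglyMeasurable (fun ω => gradient f (w m ω)) μ :=
    fun m => ((hFsm m).mono (h𝓕 m)).aestronglyMeasurable
  have hF2 : ∀ m, Integrable (fun ω => ‖gradient f (w m ω)‖ ^ 2) μ := by
    intro m
    refine Integrable.mono' ((hint m).const_mul (4 * L)) ((hFaem m).norm.pow 2) ?_
    filter_upwards with ω
    rw [Real.norm_eq_abs, abs_of_nonneg (sq_nonneg _)]
    exact sgd_grad_sq hf hf0 hHess hL (w m ω)
  have hGnonneg : ∀ m, 0 ≤ G m := fun m => integral_nonneg fun ω => sq_nonneg _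
  have hΦnonneg : ∀ m, 0 ≤ Φ m := fun m => integral_nonneg fun ω => hf0 _
  have hinner_int : ∀ m, Integrable (fun ω => inner (𝕜 := ℝ) (gradient f (w m ω)) (g m ω)) μ :=
    fun m => sgd_inner_integrable (hFaem m) (hg m) (hF2 m) (hg2 m)
  have hkey : ∀ m, ∫ ω, inner (𝕜 := ℝ) (gradient f (w m ω)) (g m ω) ∂μ = G m := fun m =>
    sgd_inner_integral μ (h𝓕 m) (hFsm m) (hF2 m) (hg m) (hg2 m) (hunbiased m)
  have hg2le : ∀ m, ∫ ω, ‖g m ω‖ ^ 2 ∂μ ≤ G m + σ ^ 2 := by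
    intro m
    have h := hvar m
    rw [integral_sub (hg2 m) (hF2 m)] at h
    have : G m = ∫ ω, ‖gradient f (w m ω)‖ ^ 2 ∂μ := rfl
    linarith
  have hstep : ∀ m, Φ (m + 1) ≤ Φ m - α m * G m + L * α m ^ 2 * (G m + σ ^ 2) := by
    intro m
    have hpt : ∀ ω, f (w (m + 1) ω) ≤ f (w m ω)
        - α m * inner (𝕜 := ℝ) (gradient f (w m ω)) (g m ω) + L * α m ^ 2 * ‖g m ω‖ ^ 2 := by
      intro ω
      have h := sgd_descent hf hHess hL.le (w m ω) (w (m + 1) ω)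
      rw [hiter m ω] at h ⊢
      have hy : w m ω - α m • g m ω - w m ω = -(α m • g m ω) := by abel
      rw [hy, inner_neg_right, real_inner_smul_right, norm_neg, norm_smul, Real.norm_eq_abs,
        abs_of_nonneg (hα m), mul_pow] at h
      nlinarith [sq_nonneg ‖g m ω‖]
    have hrhs_int : Integrable (fun ω => f (w m ω)
        - α m * inner (𝕜 := ℝ) (gradient f (w m ω)) (g m ω) + L * α m ^ 2 * ‖g m ω‖ ^ 2) μ :=
      (((hint m).sub ((hinner_int m).const_mul (α m))).add ((hg2 m).const_mul (L * α m ^ 2)))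
    have hle : Φ (m + 1) ≤ ∫ ω, (f (w m ω)
        - α m * inner (𝕜 := ℝ) (gradient f (w m ω)) (g m ω) + L * α m ^ 2 * ‖g m ω‖ ^ 2) ∂μ :=
      integral_mono (hint (m + 1)) hrhs_int hpt
    have hC : Integrable (fun ω => α m * inner (𝕜 := ℝ) (gradient f (w m ω)) (g m ω)) μ :=
      (hinner_int m).const_mul (α m)
    have hA : Integrable (fun ω => f (w m ω)
        - α m * inner (𝕜 := ℝ) (gradient f (w m ω)) (g m ω)) μ := (hint m).sub hC
    have hB : Integrable (fun ω => L * α m ^ 2 * ‖g m ω‖ ^ 2) μ :=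
      (hg2 m).const_mul (L * α m ^ 2)
    rw [integral_add hA hB, integral_sub (hint m) hC,
      integral_const_mul, integral_const_mul, hkey m] at hle
    have h2 : L * α m ^ 2 * ∫ ω, ‖g m ω‖ ^ 2 ∂μ ≤ L * α m ^ 2 * (G m + σ ^ 2) :=
      mul_le_mul_of_nonneg_left (hg2le m) (by positivity)
    have hΦm : Φ m = ∫ ω, f (w m ω) ∂μ := rfl
    linarith
  -- frequently small
  have hfreq : ∀ ε, 0 < ε → ∃ᶠ m in atTop, G m < ε := by
    intro ε hε
    by_contra hcon
    rw [not_frequently] at hcon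
    set δ := min (1 / (2 * L)) (ε / (4 * L * (σ ^ 2 + 1))) with hδdef
    have hδpos : 0 < δ := lt_min (by positivity) (by positivity)
    have hev : ∀ᶠ m in atTop, α m < δ := hα0.eventually_lt_const hδpos
    obtain ⟨N, hN⟩ := eventually_atTop.mp (hcon.and hev)
    have hstepN : ∀ m, N ≤ m → Φ (m + 1) ≤ Φ m - ε / 4 * α m := by
      intro m hm
      obtain ⟨hGm, hαm⟩ := hN m hm
      have hGm' : ε ≤ G m := not_lt.mp hGm
      have hα1 : α m ≤ 1 / (2 * L) := le_of_lt (lt_of_lt_of_le hαm (min_le_left _ _))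
      have hα2 : α m ≤ ε / (4 * L * (σ ^ 2 + 1)) :=
        le_of_lt (lt_of_lt_of_le hαm (min_le_right _ _))
      have hLα : L * α m ≤ 1 / 2 := by
        rw [le_div_iff₀ (by positivity : (0:ℝ) < 2 * L)] at hα1
        nlinarith
      have hLσ : L * α m * σ ^ 2 ≤ ε / 4 := by
        rw [le_div_iff₀ (by positivity : (0:ℝ) < 4 * L * (σ ^ 2 + 1))] at hα2
        nlinarith [sq_nonneg σ, mul_nonneg hL.le (hα m)]
      have h := hstep m
      nlinarith [mul_nonneg (by linarith : (0:ℝ) ≤ 1/2 - L * α m)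
          (mul_nonneg (hα m) (hGnonneg m)),
        mul_nonneg (hα m) (by linarith : (0:ℝ) ≤ ε/4 - L * α m * σ ^ 2),
        mul_nonneg (hα m) (by linarith : (0:ℝ) ≤ G m - ε)]
    have hsum : ∀ k, Φ (N + k) + ε / 4 * (∑ j ∈ Finset.range k, α (N + j)) ≤ Φ N := by
      intro k
      induction k with
      | zero => simp
      | succ k ih =>
        have h1 := hstepN (N + k) (Nat.le_add_right N k)
        rw [Finset.sum_range_succ]
        have h2 : N + (k + 1) = (N + k) + 1 := by omega
        rw [h2]
        have hα' := hα (N + k)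
        nlinarith [hε.le]
    obtain ⟨M, hM1, hM2⟩ := ((hdiv.eventually_ge_atTop
        ((∑ j ∈ Finset.range N, α j) + 4 / ε * Φ N + 1)).and (eventually_ge_atTop N)).exists
    have hMeq : M = N + (M - N) := by omega
    have hsplit : ∑ j ∈ Finset.range M, α j
        = (∑ j ∈ Finset.range N, α j) + ∑ j ∈ Finset.range (M - N), α (N + j) := by
      conv_lhs => rw [hMeq]
      rw [Finset.sum_range_add]
    have h3 := hsum (M - N)
    have h4 : N + (M - N) = M := by omega
    rw [h4] at h3
    have h5 : 4 / ε * Φ N + 1 ≤ ∑ j ∈ Finset.range (M - N), α (N + j) := by linarith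
    have h6 : ε / 4 * (4 / ε * Φ N + 1) = Φ N + ε / 4 := by field_simp
    have h7 : ε / 4 * (4 / ε * Φ N + 1) ≤ ε / 4 * ∑ j ∈ Finset.range (M - N), α (N + j) :=
      mul_le_mul_of_nonneg_left h5 (by positivity)
    have := hΦnonneg (N + (M - N))
    rw [h4] at this
    linarith
  -- conclude
  have hbdd : IsBoundedUnder (· ≥ ·) atTop G := isBoundedUnder_of ⟨0, fun m => hGnonneg m⟩
  have hcobdd : IsCoboundedUnder (· ≥ ·) atTop G :=
    IsCoboundedUnder.of_frequently_le ((hfreq 1 one_pos).mono fun m h => h.le)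
  refine le_antisymm ?_ (le_liminf_of_le hcobdd (Eventually.of_forall hGnonneg))
  refine le_of_forall_pos_le_add fun ε hε => ?_
  rw [zero_add]
  exact liminf_le_of_frequently_le ((hfreq ε hε).mono fun m h => h.le) hbdd
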